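/- Let E : [0,∞) → [0,∞) be a nonincreasing function satisfying ∫ₛ^∞ E(r) dr ≤ C·E(s) for all s ≥ 0, for some constant C > 0. Then E(t) ≤ E(0) · e · exp(−t/C) for all t ≥ 0 (Haraux–Lagnese inequality). -/

import Mathlib

/-!
Write `F s = ∫ r in Ici s, E r`. Since `E` is nonincreasing, `F s - F t ≥ (t - s) E t ≥ (t - s) F t / C`,
i.e. `F t (1 + (t - s) / C) ≤ F s`. Chaining this over `n` equal steps of `[0, t]` and letting
`n → ∞` gives `F t ≤ F 0 e^{-t/C}`. Finally, for `t > C`,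
`C E t ≤ ∫ r in Ico (t - C) t, E r ≤ F (t - C) ≤ C E 0 e^{1 - t/C}`, while for `t ≤ C` the bound is
just `E t ≤ E 0`.
-/

open Set MeasureTheory Filter

theorem AntitoneOn.mul_sub_le_setIntegral_Ico {E : ℝ → ℝ} {s t : ℝ}
    (hE : AntitoneOn E (Icc s t)) (hst : s ≤ t) :
    E t * (t - s) ≤ ∫ r in Ico s t, E r := by
  have h := setIntegral_ge_of_const_le_real (μ := volume) measurableSet_Ico
    measure_Ico_lt_top.ne
    (fun r hr => hE (Ico_subset_Icc_self hr) (right_mem_Icc.2 hst) hr.2.le)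
    ((hE.integrableOn_isCompact isCompact_Icc).mono_set Ico_subset_Icc_self)
  rwa [Real.volume_real_Ico_of_le hst] at h

theorem mul_pow_le_of_forall_succ_mul_le {u : ℕ → ℝ} {q : ℝ} (hq : 0 ≤ q)
    (hu : ∀ k, u (k + 1) * q ≤ u k) (n : ℕ) : u n * q ^ n ≤ u 0 := by
  induction n with
  | zero => simp
  | succ n ih =>
    calc u (n + 1) * q ^ (n + 1) = u (n + 1) * q * q ^ n := by ring
      _ ≤ u n * q ^ n := by gcongr; exact hu n
      _ ≤ u 0 := ih

theorem le_mul_exp_neg_of_mul_one_add_le {F : ℝ → ℝ} {C : ℝ} (hC : 0 ≤ C)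
    (hF : ∀ s t, 0 ≤ s → s ≤ t → F t * (1 + (t - s) / C) ≤ F s) {t : ℝ} (ht : 0 ≤ t) :
    F t ≤ F 0 * Real.exp (-t / C) := by
  have hpow : ∀ n : ℕ, 0 < n → F t * (1 + t / C / n) ^ n ≤ F 0 := by
    intro n hn
    have hn' : (n : ℝ) ≠ 0 := Nat.cast_ne_zero.2 hn.ne'
    have hstep : ∀ k : ℕ, F ((k + 1 : ℕ) * (t / n)) * (1 + t / C / n) ≤ F (k * (t / n)) := by
      intro k
      have h := hF (k * (t / n)) ((k + 1 : ℕ) * (t / n)) (by positivity) (by gcongr; omega)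
      rwa [show ((k + 1 : ℕ) : ℝ) * (t / n) - k * (t / n) = t / n by push_cast; ring,
        div_right_comm] at h
    simpa [mul_div_cancel₀ t hn'] using
      mul_pow_le_of_forall_succ_mul_le (u := fun k : ℕ => F (k * (t / n))) (by positivity) hstep n
  have hlim : F t * Real.exp (t / C) ≤ F 0 :=
    le_of_tendsto ((Real.tendsto_one_add_div_pow_exp (t / C)).const_mul (F t))
      ((eventually_gt_atTop 0).mono hpow)
  calc F t = F t * Real.exp (t / C) * Real.exp (-t / C) := by
        rw [mul_assoc, ← Real.exp_add, neg_div, add_neg_cancel, Real.exp_zero, mul_one]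
    _ ≤ F 0 * Real.exp (-t / C) := by gcongr

theorem setIntegral_Ici_mul_one_add_le {E : ℝ → ℝ} {C s t : ℝ} (hC : 0 < C) (hst : s ≤ t)
    (hE : AntitoneOn E (Icc s t)) (hint : IntegrableOn E (Ici s))
    (htail : ∫ r in Ici t, E r ≤ C * E t) :
    (∫ r in Ici t, E r) * (1 + (t - s) / C) ≤ ∫ r in Ici s, E r := by
  have hsplit := intervalIntegral.integral_Ici_sub_Ici hint hst
  have hlow := hE.mul_sub_le_setIntegral_Ico hst
  have htail' : (∫ r in Ici t, E r) * ((t - s) / C) ≤ E t * (t - s) := by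
    rw [← mul_div_assoc, div_le_iff₀ hC]
    nlinarith
  linarith

theorem AntitoneOn.mul_sub_le_setIntegral_Ici {E : ℝ → ℝ} {s t : ℝ} (hst : s ≤ t)
    (hE : AntitoneOn E (Icc s t)) (hint : IntegrableOn E (Ici s))
    (hnonneg : ∀ r, s ≤ r → 0 ≤ E r) :
    E t * (t - s) ≤ ∫ r in Ici s, E r :=
  (hE.mul_sub_le_setIntegral_Ico hst).trans <|
    setIntegral_mono_set hint (ae_restrict_of_forall_mem measurableSet_Ici hnonneg)
      Ico_subset_Ici_self.eventuallyLE

theorem setIntegral_Ici_le_mul_exp_neg {E : ℝ → ℝ} {C : ℝ} (hC : 0 < C)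
    (hmono : AntitoneOn E (Ici 0)) (hint : IntegrableOn E (Ici 0))
    (hineq : ∀ s, 0 ≤ s → ∫ r in Ici s, E r ≤ C * E s) {t : ℝ} (ht : 0 ≤ t) :
    ∫ r in Ici t, E r ≤ (∫ r in Ici 0, E r) * Real.exp (-t / C) :=
  le_mul_exp_neg_of_mul_one_add_le hC.le
    (fun _ t hs hst => setIntegral_Ici_mul_one_add_le hC hst
      (hmono.mono fun _ hr => hs.trans hr.1) (hint.mono_set (Ici_subset_Ici.2 hs))
      (hineq t (hs.trans hst))) ht

theorem stmt2_general (E : ℝ → ℝ) (C : ℝ) (hC : 0 < C)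
    (hnonneg : ∀ t, 0 ≤ t → 0 ≤ E t)
    (hmono : AntitoneOn E (Ici 0))
    (hint : IntegrableOn E (Ici 0))
    (hineq : ∀ s, 0 ≤ s → ∫ r in Ici s, E r ≤ C * E s) :
    ∀ t, 0 ≤ t → E t ≤ E 0 * Real.exp 1 * Real.exp (-t / C) := by
  intro t ht
  have hexp : Real.exp 1 * Real.exp (-t / C) = Real.exp (1 - t / C) := by
    rw [← Real.exp_add, neg_div, ← sub_eq_add_neg]
  rw [mul_assoc, hexp]
  rcases le_or_gt t C with htC | hCt
  · have h1 : 1 ≤ Real.exp (1 - t / C) :=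
      Real.one_le_exp (by rw [sub_nonneg, div_le_one hC]; exact htC)
    calc E t ≤ E 0 := hmono self_mem_Ici ht ht
      _ ≤ E 0 * Real.exp (1 - t / C) := le_mul_of_one_le_right (hnonneg 0 le_rfl) h1
  · have hs : 0 ≤ t - C := by linarith
    have hrate : -(t - C) / C = 1 - t / C := by field_simp; ring
    refine le_of_mul_le_mul_left ?_ hC
    calc C * E t = E t * (t - (t - C)) := by ring
      _ ≤ ∫ r in Ici (t - C), E r :=
          AntitoneOn.mul_sub_le_setIntegral_Ici (by linarith)
            (hmono.mono fun _ hr => hs.trans hr.1) (hint.mono_set (Ici_subset_Ici.2 hs))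
            fun r hr => hnonneg r (hs.trans hr)
      _ ≤ (∫ r in Ici 0, E r) * Real.exp (1 - t / C) :=
          hrate ▸ setIntegral_Ici_le_mul_exp_neg hC hmono hint hineq hs
      _ ≤ C * E 0 * Real.exp (1 - t / C) := by gcongr; exact hineq 0 le_rfl
      _ = C * (E 0 * Real.exp (1 - t / C)) := by ring

/-- Haraux–Lagnese inequality: if `E : [0,∞) → [0,∞)` is nonincreasing,
integrable, and `∫ₛ^∞ E(r) dr ≤ C·E(s)` for all `s ≥ 0`, then
`E(t) ≤ E(0) · e · exp(−t/C)` for all `t ≥ 0`. -/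
theorem stmt2 (E : ℝ → ℝ) (C : ℝ) (hC : 0 < C)
    (hmeas : Measurable E)
    (hnonneg : ∀ t, 0 ≤ t → 0 ≤ E t)
    (hmono : AntitoneOn E (Ici 0))
    (hint : IntegrableOn E (Ici 0))
    (hineq : ∀ s, 0 ≤ s → ∫ r in Ici s, E r ≤ C * E s) :
    ∀ t, 0 ≤ t → E t ≤ E 0 * Real.exp 1 * Real.exp (-t / C) :=
  stmt2_general E C hC hnonneg hmono hint hineq
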